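/- arXiv:1605.05259 — 6 statements merged into one kernel-verified Lean document; each statement's English description precedes it below -/
import Mathlib

section
/- Let H be a complex Hilbert space, let t₁ ≤ t₂ be real numbers, let M ≥ 0, and let A : ℝ → B(H) be a family of bounded operators such that (i) for every x ∈ H the map s ↦ A(s)x is continuous on [t₁,t₂], (ii) ‖A(s)‖ ≤ M for all s ∈ [t₁,t₂], and (iii) for Lebesgue-almost every pair (s′,s) ∈ [t₁,t₂] × [t₁,t₂] the composition A(s′)* ∘ A(s) is a compact operator. If B is a continuous linear operator on H satisfying B x = ∫_{t₁}^{t₂} A(s)x ds (Bochner integral in H) for every x ∈ H, then B is a compact operator. -/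
/-!
A bounded sequence in a Hilbert space has a weakly Cauchy subsequence: a diagonal extraction
makes `⟪x (φ n), x m⟫` converge for every `m`, and the vectors `y` for which `⟪x (φ n), y⟫` is
Cauchy form a closed subspace containing the span of the `x m` and its orthogonal complement.
If `z` is bounded and weakly Cauchy, the differences `w = z n - z m` are weakly null and
`‖B w‖² = ∫∫ ⟪A s' w, A s w⟫ = ∫∫ ⟪w, A(s')* A(s) w⟫`. A compact operator maps weakly null
sequences to norm null ones, so the integrand tends to `0` almost everywhere, and dominated
convergence (bound `M² ‖w‖²`) shows that `B z` is Cauchy. Thus `B` maps the unit ball to a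
totally bounded set.
-/

open MeasureTheory Filter Topology Metric
open scoped InnerProductSpace

theorem totallyBounded_of_forall_exists_cauchySeq {X : Type*} [PseudoMetricSpace X] {s : Set X}
    (h : ∀ u : ℕ → X, (∀ n, u n ∈ s) → ∃ φ : ℕ → ℕ, StrictMono φ ∧ CauchySeq (u ∘ φ)) :
    TotallyBounded s := by
  refine totallyBounded_iff.2 fun ε hε => ?_
  by_contra! hcover
  obtain ⟨u, hu⟩ := Set.seq_of_forall_finite_exists (P := fun y t => y ∈ s ∧ ∀ x ∈ t, ε ≤ dist y x)
    fun t ht => by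
      obtain ⟨y, hys, hy⟩ := Set.not_subset.1 (hcover t ht)
      simp only [Set.mem_iUnion, mem_ball, not_exists, not_lt] at hy
      exact ⟨y, hys, hy⟩
  obtain ⟨φ, hφ, hcauchy⟩ := h u fun n => (hu n).1
  obtain ⟨N, hN⟩ := Metric.cauchySeq_iff'.1 hcauchy ε hε
  exact (hN (N + 1) N.le_succ).not_ge ((hu _).2 _ ⟨φ N, hφ N.lt_succ_self, rfl⟩)

theorem ContinuousLinearMap.tendsto_apply_zero_of_mem_closure_span {ι 𝕜 E F : Type*}
    [NontriviallyNormedField 𝕜] [NormedAddCommGroup E] [NormedSpace 𝕜 E] [NormedAddCommGroup F]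
    [NormedSpace 𝕜 F] {l : Filter ι} {f : ι → E →L[𝕜] F} {C : ℝ} (hf : ∀ i, ‖f i‖ ≤ C)
    {s : Set E} (hs : ∀ y ∈ s, Tendsto (fun i => f i y) l (𝓝 0)) {y : E}
    (hy : y ∈ (Submodule.span 𝕜 s).topologicalClosure) : Tendsto (fun i => f i y) l (𝓝 0) := by
  let S : Submodule 𝕜 E :=
    { carrier := {y | Tendsto (fun i => f i y) l (𝓝 0)}
      add_mem' := fun ha hb => by simpa using ha.add hb
      zero_mem' := by simpa using tendsto_const_nhds
      smul_mem' := fun c y hy => by simpa using hy.const_smul c }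
  have hequi : Equicontinuous ((↑) ∘ f) :=
    ((NormedSpace.equicontinuous_TFAE f).out 5 1).1 (⟨C, hf⟩ : ∃ C, ∀ i, ‖f i‖ ≤ C)
  have hS : IsClosed (S : Set E) := hequi.isClosed_setOfPred_tendsto continuous_const
  exact Submodule.topologicalClosure_minimal _ (Submodule.span_le.2 fun y hy => hs y hy) hS hy

theorem exists_subseq_forall_tendsto {X : Type*} [TopologicalSpace X] [FirstCountableTopology X]
    {K : ℕ → Set X} (hK : ∀ m, IsCompact (K m)) (a : ℕ → ℕ → X) (ha : ∀ n m, a n m ∈ K m) :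
    ∃ φ : ℕ → ℕ, StrictMono φ ∧ ∀ m, ∃ L, Tendsto (fun n => a (φ n) m) atTop (𝓝 L) := by
  obtain ⟨L, -, φ, hφ, hL⟩ := (isCompact_univ_pi hK).isSeqCompact fun n m _ => ha n m
  exact ⟨φ, hφ, fun m => ⟨L m, tendsto_pi_nhds.1 hL m⟩⟩

section Hilbert

variable {H : Type*} [NormedAddCommGroup H] [InnerProductSpace ℂ H]

theorem cauchySeq_inner_left_iff {z : ℕ → H} {y : H} :
    CauchySeq (fun n => ⟪z n, y⟫_ℂ) ↔
      Tendsto (fun q : ℕ × ℕ => ⟪z q.1 - z q.2, y⟫_ℂ) atTop (𝓝 0) := by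
  rw [cauchySeq_iff_tendsto_dist_atTop_0,
    tendsto_zero_iff_norm_tendsto_zero (f := fun q : ℕ × ℕ => ⟪z q.1 - z q.2, y⟫_ℂ)]
  simp only [dist_eq_norm, inner_sub_left]

variable [CompleteSpace H]

theorem exists_subseq_cauchySeq_inner (x : ℕ → H) {C : ℝ} (hx : ∀ n, ‖x n‖ ≤ C) :
    ∃ φ : ℕ → ℕ, StrictMono φ ∧ ∀ y, CauchySeq (fun n => ⟪x (φ n), y⟫_ℂ) := by
  have hC : 0 ≤ C := (norm_nonneg _).trans (hx 0)
  obtain ⟨φ, hφ, hlim⟩ := exists_subseq_forall_tendsto (fun _ => isCompact_closedBall 0 (C * C))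
    (fun n m => ⟪x n, x m⟫_ℂ) fun n m => mem_closedBall_zero_iff.2 <|
      (norm_inner_le_norm _ _).trans (mul_le_mul (hx n) (hx m) (norm_nonneg _) hC)
  refine ⟨φ, hφ, fun y => cauchySeq_inner_left_iff.2 ?_⟩
  set K := Submodule.span ℂ (Set.range x)
  have hdense : (Submodule.span ℂ (Set.range x ∪ Kᗮ)).topologicalClosure = ⊤ := by
    rw [eq_top_iff, ← K.topologicalClosure.sup_orthogonal_of_hasOrthogonalProjection,
      Submodule.orthogonal_closure]
    exact sup_le (Submodule.topologicalClosure_mono (Submodule.span_mono Set.subset_union_left))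
      fun y hy => Submodule.le_topologicalClosure _ (Submodule.subset_span (Or.inr hy))
  refine ContinuousLinearMap.tendsto_apply_zero_of_mem_closure_span
    (f := fun q : ℕ × ℕ => innerSL ℂ (x (φ q.1) - x (φ q.2))) (C := C + C)
    (fun q => (innerSL_apply_norm ℂ _).trans_le (norm_sub_le_of_le (hx _) (hx _))) ?_
    (hdense ▸ Submodule.mem_top)
  rintro _ (⟨m, rfl⟩ | hy)
  · obtain ⟨L, hL⟩ := hlim m
    exact cauchySeq_inner_left_iff.1 hL.cauchySeq
  · have hmem : ∀ q : ℕ × ℕ, x (φ q.1) - x (φ q.2) ∈ K := fun q =>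
      K.sub_mem (Submodule.subset_span ⟨_, rfl⟩) (Submodule.subset_span ⟨_, rfl⟩)
    simp only [innerSL_apply_apply, Submodule.inner_right_of_mem_orthogonal (hmem _) hy]
    exact tendsto_const_nhds

theorem IsCompactOperator.tendsto_zero_of_forall_inner_tendsto_zero {G : Type*}
    [NormedAddCommGroup G] [InnerProductSpace ℂ G] [CompleteSpace G] {T : H →L[ℂ] G}
    (hT : IsCompactOperator T) {ι : Type*} {l : Filter ι} {w : ι → H} {C : ℝ}
    (hw : ∀ i, ‖w i‖ ≤ C) (hweak : ∀ y, Tendsto (fun i => ⟪w i, y⟫_ℂ) l (𝓝 0)) :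
    Tendsto (fun i => T (w i)) l (𝓝 0) := by
  refine (hT.isCompact_closure_image_of_bounded (isBounded_closedBall (x := 0) (r := C)))
    |>.tendsto_nhds_of_unique_mapClusterPt
      (Eventually.of_forall fun i => subset_closure ⟨w i, mem_closedBall_zero_iff.2 (hw i), rfl⟩)
      fun c _ hc => ?_
  -- `⟪T (w i), c⟫ = ⟪w i, T† c⟫ → 0`, while it clusters at `⟪c, c⟫`
  have hlim : Tendsto (fun i => ⟪T (w i), c⟫_ℂ) l (𝓝 0) := by
    simpa only [← ContinuousLinearMap.adjoint_inner_right] using hweak (T.adjoint c)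
  have hcluster : MapClusterPt ⟪c, c⟫_ℂ l (fun i => ⟪T (w i), c⟫_ℂ) :=
    hc.continuousAt_comp (f := fun v => ⟪v, c⟫_ℂ)
      (continuous_id.inner continuous_const).continuousAt
  simpa using eq_of_nhds_neBot (hcluster.clusterPt.mono hlim)

theorem isCompactOperator_of_cauchySeq {F : Type*} [NormedAddCommGroup F] [NormedSpace ℂ F]
    [CompleteSpace F] (T : H →L[ℂ] F)
    (hT : ∀ z : ℕ → H, (∀ n, ‖z n‖ ≤ 1) → (∀ y, CauchySeq fun n => ⟪z n, y⟫_ℂ) →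
      CauchySeq (T ∘ z)) :
    IsCompactOperator T := by
  refine (isCompactOperator_iff_isCompact_closure_image_closedBall (T : H →ₗ[ℂ] F) one_pos).2 <|
    (totallyBounded_of_forall_exists_cauchySeq fun u hu => ?_).closure.isCompact_of_isClosed
    isClosed_closure
  choose x hx hxu using hu
  have hx1 : ∀ n, ‖x n‖ ≤ 1 := fun n => mem_closedBall_zero_iff.1 (hx n)
  obtain ⟨φ, hφ, hweak⟩ := exists_subseq_cauchySeq_inner x hx1
  refine ⟨φ, hφ, ?_⟩
  convert hT (x ∘ φ) (fun n => hx1 (φ n)) hweak using 1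
  ext n
  exact (hxu (φ n)).symm

theorem inner_integral_integral {α β : Type*} [MeasurableSpace α] [MeasurableSpace β]
    {μ : Measure α} {ν : Measure β} [SFinite μ] [SFinite ν] {f : α → H} {g : β → H}
    (hf : Integrable f μ) (hg : Integrable g ν) :
    ⟪∫ a, f a ∂μ, ∫ b, g b ∂ν⟫_ℂ = ∫ p, ⟪f p.1, g p.2⟫_ℂ ∂μ.prod ν := by
  have hint : Integrable (fun p : α × β => ⟪f p.1, g p.2⟫_ℂ) (μ.prod ν) :=
    (hf.norm.mul_prod hg.norm).mono' (hf.1.comp_fst.inner hg.1.comp_snd)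
      (ae_of_all _ fun p => norm_inner_le_norm _ _)
  rw [integral_prod _ hint]
  simp only [integral_inner hg]
  rw [← inner_conj_symm, ← integral_inner hf, ← integral_conj]
  simp only [inner_conj_symm]

theorem tendsto_integral_apply_zero_of_tendsto_inner {α : Type*} [MeasurableSpace α]
    (μ : Measure α) [IsFiniteMeasure μ] (A : α → H →L[ℂ] H)
    (hA : ∀ v, AEStronglyMeasurable (fun s => A s v) μ)
    {M : ℝ} (hbound : ∀ᵐ s ∂μ, ‖A s‖ ≤ M)
    (hcompact : ∀ᵐ p ∂μ.prod μ, IsCompactOperator ((A p.1).adjoint ∘L A p.2))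
    {ι : Type*} {l : Filter ι} [l.IsCountablyGenerated] {w : ι → H} {C : ℝ}
    (hw : ∀ i, ‖w i‖ ≤ C) (hweak : ∀ y, Tendsto (fun i => ⟪w i, y⟫_ℂ) l (𝓝 0)) :
    Tendsto (fun i => ∫ s, A s (w i) ∂μ) l (𝓝 0) := by
  have happly : ∀ v, ∀ᵐ s ∂μ, ‖A s v‖ ≤ M * ‖v‖ :=
    fun v => hbound.mono fun s hs => (A s).le_of_opNorm_le hs v
  have hint : ∀ v, Integrable (fun s => A s v) μ :=
    fun v => Integrable.of_bound (hA v) _ (happly v)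
  have hbound₂ : ∀ᵐ p ∂μ.prod μ, ‖A p.1‖ ≤ M ∧ ‖A p.2‖ ≤ M :=
    (Measure.quasiMeasurePreserving_fst.ae hbound).and
      (Measure.quasiMeasurePreserving_snd.ae hbound)
  have hdom : Tendsto (fun i => ∫ p, ⟪A p.1 (w i), A p.2 (w i)⟫_ℂ ∂μ.prod μ) l (𝓝 0) := by
    rw [← integral_zero (α × α) ℂ]
    refine tendsto_integral_filter_of_dominated_convergence (fun _ => (M * C) * (M * C))
      (Eventually.of_forall fun i => (hA (w i)).comp_fst.inner (hA (w i)).comp_snd)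
      (Eventually.of_forall fun i => ?_) (integrable_const _) ?_
    · filter_upwards [hbound₂] with p hp
      have hM : 0 ≤ M := (norm_nonneg _).trans hp.1
      have h₁ := ((A p.1).le_of_opNorm_le hp.1 (w i)).trans (mul_le_mul_of_nonneg_left (hw i) hM)
      have h₂ := ((A p.2).le_of_opNorm_le hp.2 (w i)).trans (mul_le_mul_of_nonneg_left (hw i) hM)
      exact (norm_inner_le_norm _ _).trans
        (mul_le_mul h₁ h₂ (norm_nonneg _) ((norm_nonneg _).trans h₁))
    · filter_upwards [hcompact] with p hK
      have hKw := hK.tendsto_zero_of_forall_inner_tendsto_zero hw hweak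
      refine squeeze_zero_norm (fun i => ?_) (by simpa using hKw.norm.const_mul C)
      rw [← ContinuousLinearMap.adjoint_inner_right]
      exact (norm_inner_le_norm _ _).trans (mul_le_mul_of_nonneg_right (hw i) (norm_nonneg _))
  have hsq : Tendsto (fun i => ‖∫ s, A s (w i) ∂μ‖ ^ 2) l (𝓝 0) := by
    simpa [← inner_integral_integral (hint _) (hint _), inner_self_eq_norm_sq_to_K] using hdom.norm
  refine tendsto_zero_iff_norm_tendsto_zero.2 ?_
  simpa [Real.sqrt_sq (norm_nonneg _)] using hsq.sqrt

end Hilbert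

theorem stmt0_general {H : Type*} [NormedAddCommGroup H] [InnerProductSpace ℂ H] [CompleteSpace H]
    (t₁ t₂ : ℝ) (ht : t₁ ≤ t₂) (M : ℝ)
    (A : ℝ → H →L[ℂ] H)
    (hcont : ∀ x : H, ContinuousOn (fun s => A s x) (Set.Icc t₁ t₂))
    (hbound : ∀ s ∈ Set.Icc t₁ t₂, ‖A s‖ ≤ M)
    (hcompact : ∀ᵐ p : ℝ × ℝ
        ∂((volume : Measure (ℝ × ℝ)).restrict (Set.Icc t₁ t₂ ×ˢ Set.Icc t₁ t₂)),
      IsCompactOperator (ContinuousLinearMap.adjoint (A p.1) ∘L A p.2))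
    (B : H →L[ℂ] H)
    (hB : ∀ x : H, B x = ∫ s in t₁..t₂, A s x) :
    IsCompactOperator B := by
  set μ := volume.restrict (Set.Icc t₁ t₂)
  have hprod : μ.prod μ = (volume : Measure (ℝ × ℝ)).restrict (Set.Icc t₁ t₂ ×ˢ Set.Icc t₁ t₂) := by
    rw [Measure.prod_restrict, Measure.volume_eq_prod]
  have hBμ : ∀ v, B v = ∫ s, A s v ∂μ := fun v => by
    rw [hB, intervalIntegral.integral_of_le ht, integral_Icc_eq_integral_Ioc]
  refine isCompactOperator_of_cauchySeq B fun z hz hzw => ?_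
  rw [cauchySeq_iff_tendsto_dist_atTop_0]
  simp_rw [Function.comp_apply, dist_eq_norm, ← map_sub B, hBμ]
  refine tendsto_zero_iff_norm_tendsto_zero.1 <|
    tendsto_integral_apply_zero_of_tendsto_inner μ A
      (fun v => (hcont v).aestronglyMeasurable measurableSet_Icc)
      (ae_restrict_of_forall_mem measurableSet_Icc hbound) (hprod ▸ hcompact)
      (fun q : ℕ × ℕ => norm_sub_le_of_le (hz q.1) (hz q.2))
      fun y => cauchySeq_inner_left_iff.1 (hzw y)

/-- The averaging argument of Lemma 2.1: if `A : ℝ → B(H)` is a strongly continuous,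
uniformly bounded family on `[t₁,t₂]` such that `A(s′)* ∘ A(s)` is compact for almost
every pair `(s′,s)`, then the strong-operator integral `B = ∫_{t₁}^{t₂} A(s) ds`
is a compact operator. -/
theorem stmt0 {H : Type*} [NormedAddCommGroup H] [InnerProductSpace ℂ H] [CompleteSpace H]
    (t₁ t₂ : ℝ) (ht : t₁ ≤ t₂) (M : ℝ) (hM : 0 ≤ M)
    (A : ℝ → H →L[ℂ] H)
    (hcont : ∀ x : H, ContinuousOn (fun s => A s x) (Set.Icc t₁ t₂))
    (hbound : ∀ s ∈ Set.Icc t₁ t₂, ‖A s‖ ≤ M)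
    (hcompact : ∀ᵐ p : ℝ × ℝ
        ∂((volume : Measure (ℝ × ℝ)).restrict (Set.Icc t₁ t₂ ×ˢ Set.Icc t₁ t₂)),
      IsCompactOperator (ContinuousLinearMap.adjoint (A p.1) ∘L A p.2))
    (B : H →L[ℂ] H)
    (hB : ∀ x : H, B x = ∫ s in t₁..t₂, A s x) :
    IsCompactOperator B :=
  stmt0_general t₁ t₂ ht M A hcont hbound hcompact B hB
end

section
/- Let A be a complex unital Banach algebra, let R ∈ A, let n ≥ 1, let v ≥ 0 and t ≥ 0, and let V₁, …, Vₙ : ℝ → A be continuous maps with ‖Vⱼ(u)‖ ≤ v for all u ∈ [0, t] and all j. Define M₀ : ℝ → A by M₀(r) = R, and recursively, for 1 ≤ j ≤ n, Mⱼ(r) = ∫₀ʳ (Mⱼ₋₁(s) Vⱼ(s) − Vⱼ(s) Mⱼ₋₁(s)) ds (Bochner integral in A of the continuous integrand). Then for all s with 0 ≤ s ≤ t one has ‖Mₙ(t) − Mₙ(s)‖ ≤ 2ⁿ vⁿ ‖R‖ (tⁿ − sⁿ)/n!. -/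
open MeasureTheory intervalIntegral

/-!
The commutator with `Vⱼ` at most multiplies norms by `2v`, so an induction gives
`‖Mⱼ(r)‖ ≤ (2v)ʲ ‖R‖ rʲ / j!` on `[0, t]`. Then `Mₙ(t) − Mₙ(s) = ∫ₛᵗ [Mₙ₋₁, Vₙ]`, and integrating
the bound `2v · (2v)ⁿ⁻¹ ‖R‖ uⁿ⁻¹ / (n − 1)!` over `[s, t]` gives the claim.
-/

open scoped Nat

theorem norm_mul_sub_mul_le {A : Type*} [NonUnitalSeminormedRing A] (a b : A) :
    ‖a * b - b * a‖ ≤ 2 * ‖a‖ * ‖b‖ :=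
  calc ‖a * b - b * a‖ ≤ ‖a‖ * ‖b‖ + ‖b‖ * ‖a‖ :=
        (norm_sub_le _ _).trans (add_le_add (norm_mul_le a b) (norm_mul_le b a))
    _ = 2 * ‖a‖ * ‖b‖ := by ring

theorem norm_integral_le_of_norm_le_mul_pow_div_factorial {E : Type*} [NormedAddCommGroup E]
    [NormedSpace ℝ E] {f : ℝ → E} {a b c : ℝ} {k : ℕ} (hab : a ≤ b)
    (hf : ∀ u ∈ Set.Icc a b, ‖f u‖ ≤ c * u ^ k / k !) :
    ‖∫ u in a..b, f u‖ ≤ c * (b ^ (k + 1) - a ^ (k + 1)) / (k + 1)! := by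
  have hbound : ‖∫ u in a..b, f u‖ ≤ ∫ u in a..b, c / k ! * u ^ k := by
    refine norm_integral_le_of_norm_le hab (Filter.Eventually.of_forall fun u hu => ?_)
      ((continuous_const.mul (continuous_pow k)).intervalIntegrable a b)
    exact (hf u (Set.Ioc_subset_Icc_self hu)).trans_eq (by ring)
  rw [intervalIntegral.integral_const_mul, _root_.integral_pow] at hbound
  refine hbound.trans_eq ?_
  rw [Nat.factorial_succ]
  push_cast
  field_simp

section CommutatorIntegrals

variable {A : Type*} [NormedRing A] [NormedSpace ℝ A]

theorem norm_integral_mul_sub_mul_le {f g : ℝ → A} {a b c v : ℝ} {k : ℕ} (hab : a ≤ b)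
    (hf : ∀ u ∈ Set.Icc a b, ‖f u‖ ≤ c * u ^ k / k !) (hg : ∀ u ∈ Set.Icc a b, ‖g u‖ ≤ v) :
    ‖∫ u in a..b, (f u * g u - g u * f u)‖ ≤
      2 * v * c * (b ^ (k + 1) - a ^ (k + 1)) / (k + 1)! := by
  rw [mul_assoc 2 v c]
  refine norm_integral_le_of_norm_le_mul_pow_div_factorial hab fun u hu => ?_
  have hv : 0 ≤ v := (norm_nonneg _).trans (hg u hu)
  calc ‖f u * g u - g u * f u‖ ≤ 2 * ‖g u‖ * ‖f u‖ :=
        (norm_sub_rev _ _).trans_le (norm_mul_sub_mul_le _ _)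
    _ ≤ 2 * v * (c * u ^ k / k !) := by gcongr; exacts [hg u hu, hf u hu]
    _ = 2 * (v * c) * u ^ k / k ! := by ring

variable {R : A} {n : ℕ} {v t : ℝ} {V M : ℕ → ℝ → A}

theorem continuous_of_eq_integral_mul_sub_mul (hV : ∀ j < n, Continuous (V (j + 1)))
    (hM0 : ∀ r, M 0 r = R)
    (hM : ∀ j < n, ∀ r,
      M (j + 1) r = ∫ s in (0 : ℝ)..r, (M j s * V (j + 1) s - V (j + 1) s * M j s)) :
    ∀ j ≤ n, Continuous (M j)
  | 0, _ => by rw [funext hM0]; exact continuous_const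
  | j + 1, hj => by
    have hMj := continuous_of_eq_integral_mul_sub_mul hV hM0 hM j (j.le_succ.trans hj)
    have hVj := hV j hj
    rw [funext (hM j hj)]
    exact continuous_primitive
      (fun a b => ((hMj.mul hVj).sub (hVj.mul hMj)).intervalIntegrable a b) 0

theorem norm_le_of_eq_integral_mul_sub_mul (hV : ∀ j < n, ∀ u ∈ Set.Icc 0 t, ‖V (j + 1) u‖ ≤ v)
    (hM0 : ∀ r, M 0 r = R)
    (hM : ∀ j < n, ∀ r,
      M (j + 1) r = ∫ s in (0 : ℝ)..r, (M j s * V (j + 1) s - V (j + 1) s * M j s)) :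
    ∀ j ≤ n, ∀ r ∈ Set.Icc 0 t, ‖M j r‖ ≤ (2 * v) ^ j * ‖R‖ * r ^ j / j !
  | 0, _ => fun r _ => by simp [hM0]
  | j + 1, hj => fun r hr => by
    have hMj := norm_le_of_eq_integral_mul_sub_mul hV hM0 hM j (j.le_succ.trans hj)
    rw [hM j hj]
    refine (norm_integral_mul_sub_mul_le hr.1 (fun u hu => hMj u ⟨hu.1, hu.2.trans hr.2⟩)
      (fun u hu => hV j hj u ⟨hu.1, hu.2.trans hr.2⟩)).trans_eq ?_
    rw [zero_pow j.succ_ne_zero, sub_zero, pow_succ]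
    ring

end CommutatorIntegrals

theorem stmt2_general {A : Type*} [NormedRing A] [NormedAlgebra ℂ A]
    (R : A) (n : ℕ) (v t : ℝ)
    (V : ℕ → ℝ → A)
    (hVcont : ∀ j, 1 ≤ j → j ≤ n → Continuous (V j))
    (hVbound : ∀ j, 1 ≤ j → j ≤ n → ∀ u ∈ Set.Icc (0 : ℝ) t, ‖V j u‖ ≤ v)
    (M : ℕ → ℝ → A)
    (hM0 : ∀ r : ℝ, M 0 r = R)
    (hMrec : ∀ j, 1 ≤ j → j ≤ n → ∀ r : ℝ,
      M j r = ∫ s in (0 : ℝ)..r, (M (j - 1) s * V j s - V j s * M (j - 1) s)) :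
    ∀ s : ℝ, 0 ≤ s → s ≤ t →
      ‖M n t - M n s‖ ≤ 2 ^ n * v ^ n * ‖R‖ * (t ^ n - s ^ n) / n.factorial := by
  intro s hs hst
  obtain _ | m := n
  · simp [hM0]
  have hM : ∀ j < m + 1, ∀ r, M (j + 1) r =
      ∫ s in (0 : ℝ)..r, (M j s * V (j + 1) s - V (j + 1) s * M j s) := fun j hj r => by
    simpa using hMrec (j + 1) j.succ_pos hj r
  have hV : ∀ j < m + 1, Continuous (V (j + 1)) := fun j hj => hVcont (j + 1) j.succ_pos hj
  have hMm := continuous_of_eq_integral_mul_sub_mul hV hM0 hM m m.le_succ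
  have hVm := hV m m.lt_succ_self
  have hdiff : M (m + 1) t - M (m + 1) s =
      ∫ u in s..t, (M m u * V (m + 1) u - V (m + 1) u * M m u) := by
    rw [hM m m.lt_succ_self, hM m m.lt_succ_self]
    exact integral_interval_sub_left ((by fun_prop : Continuous _).intervalIntegrable _ _)
      ((by fun_prop : Continuous _).intervalIntegrable _ _)
  rw [hdiff]
  refine (norm_integral_mul_sub_mul_le hst
    (fun u hu => norm_le_of_eq_integral_mul_sub_mul
      (fun j hj => hVbound (j + 1) j.succ_pos hj) hM0 hM m m.le_succ u ⟨hs.trans hu.1, hu.2⟩)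
    (fun u hu => hVbound (m + 1) m.succ_pos le_rfl u ⟨hs.trans hu.1, hu.2⟩)).trans_eq ?_
  ring

/-- Lemma 3.1(i): norm estimate for the iterated commutator integrals (Dyson terms).
With `M₀ ≡ R` and `Mⱼ(r) = ∫₀ʳ [Mⱼ₋₁(s), Vⱼ(s)] ds`, one has
`‖Mₙ(t) − Mₙ(s)‖ ≤ 2ⁿ vⁿ ‖R‖ (tⁿ − sⁿ)/n!` for `0 ≤ s ≤ t`. -/
theorem stmt2 {A : Type*} [NormedRing A] [NormedAlgebra ℂ A] [CompleteSpace A]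
    (R : A) (n : ℕ) (hn : 1 ≤ n) (v t : ℝ) (hv : 0 ≤ v) (ht : 0 ≤ t)
    (V : ℕ → ℝ → A)
    (hVcont : ∀ j, 1 ≤ j → j ≤ n → Continuous (V j))
    (hVbound : ∀ j, 1 ≤ j → j ≤ n → ∀ u ∈ Set.Icc (0 : ℝ) t, ‖V j u‖ ≤ v)
    (M : ℕ → ℝ → A)
    (hM0 : ∀ r : ℝ, M 0 r = R)
    (hMrec : ∀ j, 1 ≤ j → j ≤ n → ∀ r : ℝ,
      M j r = ∫ s in (0 : ℝ)..r, (M (j - 1) s * V j s - V j s * M (j - 1) s)) :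
    ∀ s : ℝ, 0 ≤ s → s ≤ t →
      ‖M n t - M n s‖ ≤ 2 ^ n * v ^ n * ‖R‖ * (t ^ n - s ^ n) / n.factorial :=
  stmt2_general R n v t V hVcont hVbound M hM0 hMrec
end

section
/- Let d ≥ 1 and n ≥ 1 be integers. Call two points λ, μ ∈ ℤᵈ nearest neighbors if ∑ᵢ |λᵢ − μᵢ| = 1. Let Λ₀ ⊆ ℤᵈ be a finite set with L₀ = |Λ₀| elements. Then the set of all sequences ((λ′₁, λ″₁), …, (λ′ₙ, λ″ₙ)) of ordered pairs of nearest neighbors in ℤᵈ satisfying the growth condition — namely, setting S₀ = Λ₀ and Sⱼ = Sⱼ₋₁ ∪ {λ′ⱼ, λ″ⱼ}, one requires λ′ⱼ ∈ Sⱼ₋₁ or λ″ⱼ ∈ Sⱼ₋₁ for every j ∈ {1, …, n} — is finite, and its cardinality is at most 2^{(d+1)n} · L₀ (L₀ + 1) ⋯ (L₀ + n − 1). -/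
/-!
Orient each pair so that its first point, the anchor, lies in the region grown so far; the other
point is the fresh one. Every point of the region is a point of `Λ₀` or the fresh point of an
earlier step, so the anchor of step `j` can be named by one of `L₀ + j` labels. Together with the
orientation bit and the unit vector from the anchor to the fresh point (`2d` choices), this
encodes step `j` given the earlier steps, which gives at most `4d (L₀ + j) ≤ 2^{d+1} (L₀ + j)`
choices for it.
-/

open Finset

namespace Int

def unitVectors (ι : Type*) [Fintype ι] [DecidableEq ι] : Finset (ι → ℤ) :=
  univ.image fun z : ι × ℤˣ => Pi.single z.1 (z.2 : ℤ)

variable {ι : Type*} [Fintype ι] [DecidableEq ι]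

theorem card_unitVectors_le : #(unitVectors ι) ≤ 2 * Fintype.card ι := by
  calc #(unitVectors ι) ≤ #(univ : Finset (ι × ℤˣ)) := card_image_le
    _ = 2 * Fintype.card ι := by simp [mul_comm]

theorem mem_unitVectors_of_sum_abs_eq_one {v : ι → ℤ} (hv : ∑ i, |v i| = 1) :
    v ∈ unitVectors ι := by
  obtain ⟨i₀, hi₀⟩ : ∃ i₀, v i₀ ≠ 0 := by
    by_contra! h
    simp [h] at hv
  have hsplit : |v i₀| + ∑ i ∈ univ.erase i₀, |v i| = 1 := by
    rw [add_sum_erase univ (fun i => |v i|) (mem_univ i₀), hv]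
  have hrest_nonneg : 0 ≤ ∑ i ∈ univ.erase i₀, |v i| := sum_nonneg fun i _ => abs_nonneg _
  have hi₀_abs : |v i₀| = 1 := by have := one_le_abs hi₀; omega
  have hrest : ∀ i ∈ univ.erase i₀, |v i| = 0 :=
    (sum_eq_zero_iff_of_nonneg fun i _ => abs_nonneg _).mp (by omega)
  refine mem_image.mpr ⟨(i₀, (Int.isUnit_iff_abs_eq.mpr hi₀_abs).unit), mem_univ _, ?_⟩
  ext i
  by_cases hi : i = i₀
  · subst hi; simp
  · simpa [Pi.single_eq_of_ne hi, eq_comm] using hrest i (by simp [hi])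

end Int

theorem Nat.four_mul_le_two_pow_succ : ∀ d : ℕ, 4 * d ≤ 2 ^ (d + 1)
  | 0 => by norm_num
  | d + 1 => by
    have := Nat.lt_two_pow_self (n := d)
    rw [pow_succ, pow_succ]
    omega

namespace GrowingPairSeq

variable {α : Type*} {n : ℕ} (Λ₀ : Finset α) (p : Fin n → α × α)

def region (j : Fin n) : Set α :=
  ↑Λ₀ ∪ {x | ∃ i < j, x = (p i).1 ∨ x = (p i).2}

def IsGrowing : Prop :=
  ∀ j, (p j).1 ∈ region Λ₀ p j ∨ (p j).2 ∈ region Λ₀ p j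

open Classical in
noncomputable def anchor (j : Fin n) : α :=
  if (p j).1 ∈ region Λ₀ p j then (p j).1 else (p j).2

open Classical in
noncomputable def fresh (j : Fin n) : α :=
  if (p j).1 ∈ region Λ₀ p j then (p j).2 else (p j).1

variable {Λ₀ p}

theorem anchor_mem_region (hp : IsGrowing Λ₀ p) (j : Fin n) : anchor Λ₀ p j ∈ region Λ₀ p j := by
  unfold anchor
  split_ifs with h
  · exact h
  · exact (hp j).resolve_left h

theorem eq_anchor_or_eq_fresh {i : Fin n} {x : α} (hx : x = (p i).1 ∨ x = (p i).2) :
    x = anchor Λ₀ p i ∨ x = fresh Λ₀ p i := by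
  unfold anchor fresh
  split_ifs <;> tauto

theorem mem_or_eq_fresh_of_mem_region (hp : IsGrowing Λ₀ p) (j : Fin n) :
    ∀ x ∈ region Λ₀ p j, x ∈ Λ₀ ∨ ∃ i < j, x = fresh Λ₀ p i := by
  induction j using WellFoundedLT.induction with
  | _ j ih =>
    rintro x (hx | ⟨i, hij, hx⟩)
    · exact .inl hx
    rcases eq_anchor_or_eq_fresh (Λ₀ := Λ₀) hx with rfl | rfl
    · rcases ih i hij _ (anchor_mem_region hp i) with h | ⟨k, hki, hk⟩
      · exact .inl h
      · exact .inr ⟨k, hki.trans hij, hk⟩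
    · exact .inr ⟨i, hij, rfl⟩

variable (Λ₀ p) in
noncomputable def decodeAnchor (j : Fin n) : Λ₀ ⊕ Fin j → α :=
  Sum.elim Subtype.val fun i => fresh Λ₀ p (Fin.castLE j.is_lt.le i)

theorem anchor_mem_range_decodeAnchor (hp : IsGrowing Λ₀ p) (j : Fin n) :
    anchor Λ₀ p j ∈ Set.range (decodeAnchor Λ₀ p j) := by
  rcases mem_or_eq_fresh_of_mem_region hp j _ (anchor_mem_region hp j) with h | ⟨i, hij, hi⟩
  · exact ⟨.inl ⟨_, h⟩, rfl⟩
  · exact ⟨.inr ⟨i, hij⟩, hi.symm⟩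

variable {q : Fin n → α × α} {j : Fin n}

theorem region_congr (hpq : ∀ i < j, p i = q i) : region Λ₀ p j = region Λ₀ q j := by
  ext x
  simp only [region, Set.mem_union]
  constructor <;> rintro (h | ⟨i, hij, hx⟩)
  exacts [.inl h, .inr ⟨i, hij, hpq i hij ▸ hx⟩, .inl h, .inr ⟨i, hij, (hpq i hij).symm ▸ hx⟩]

theorem decodeAnchor_congr (hpq : ∀ i < j, p i = q i) :
    decodeAnchor Λ₀ p j = decodeAnchor Λ₀ q j := by
  have hfresh : ∀ i < j, fresh Λ₀ p i = fresh Λ₀ q i := fun i hij => by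
    rw [fresh, fresh, region_congr fun k hki => hpq k (hki.trans hij), hpq i hij]
  ext (a | i)
  · rfl
  · exact hfresh _ i.is_lt

theorem apply_eq_of_anchor_eq_of_fresh_eq (hpq : ∀ i < j, p i = q i)
    (horient : (p j).1 ∈ region Λ₀ p j ↔ (q j).1 ∈ region Λ₀ q j)
    (hanchor : anchor Λ₀ p j = anchor Λ₀ q j) (hfresh : fresh Λ₀ p j = fresh Λ₀ q j) :
    p j = q j := by
  rw [region_congr hpq] at horient
  unfold anchor at hanchor
  unfold fresh at hfresh
  rw [region_congr hpq] at hanchor hfresh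
  by_cases h : (p j).1 ∈ region Λ₀ q j
  · have h' := horient.mp h
    simp only [h, h', if_true] at hanchor hfresh
    exact Prod.ext hanchor hfresh
  · have h' := mt horient.mpr h
    simp only [h, h', if_false] at hanchor hfresh
    exact Prod.ext hfresh hanchor

theorem eq_of_forall_anchor_fresh [AddGroup α] {c : ∀ j : Fin n, Λ₀ ⊕ Fin j}
    (hcp : ∀ j, decodeAnchor Λ₀ p j (c j) = anchor Λ₀ p j)
    (hcq : ∀ j, decodeAnchor Λ₀ q j (c j) = anchor Λ₀ q j)
    (horient : ∀ j, (p j).1 ∈ region Λ₀ p j ↔ (q j).1 ∈ region Λ₀ q j)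
    (hstep : ∀ j, fresh Λ₀ p j - anchor Λ₀ p j = fresh Λ₀ q j - anchor Λ₀ q j) : p = q := by
  funext j
  induction j using WellFoundedLT.induction with
  | _ j ih =>
    have hanchor : anchor Λ₀ p j = anchor Λ₀ q j := by
      rw [← hcp, ← hcq, decodeAnchor_congr ih]
    have hfresh : fresh Λ₀ p j = fresh Λ₀ q j := by
      simpa [hanchor] using hstep j
    exact apply_eq_of_anchor_eq_of_fresh_eq ih (horient j) hanchor hfresh

theorem sum_abs_fresh_sub_anchor {ι : Type*} [Fintype ι] {Λ₀ : Finset (ι → ℤ)}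
    {p : Fin n → (ι → ℤ) × (ι → ℤ)} {j : Fin n} (hj : ∑ i, |(p j).1 i - (p j).2 i| = 1) :
    ∑ i, |(fresh Λ₀ p j - anchor Λ₀ p j) i| = 1 := by
  unfold fresh anchor
  split_ifs
  · simpa only [Pi.sub_apply, abs_sub_comm] using hj
  · exact hj

section Lattice

variable {ι : Type*} [Fintype ι] [DecidableEq ι] (Λ₀ : Finset (ι → ℤ)) (n : ℕ)

def growingNeighborSeqs : Set (Fin n → (ι → ℤ) × (ι → ℤ)) :=
  {p | (∀ j, ∑ i, |(p j).1 i - (p j).2 i| = 1) ∧ IsGrowing Λ₀ p}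

theorem exists_injective_code : ∃ f : growingNeighborSeqs Λ₀ n →
    ∀ j : Fin n, Bool × Int.unitVectors ι × (Λ₀ ⊕ Fin j), f.Injective := by
  classical
  let code (p : growingNeighborSeqs Λ₀ n) (j : Fin n) :
      Bool × Int.unitVectors ι × (Λ₀ ⊕ Fin j) :=
    (decide ((p.1 j).1 ∈ region Λ₀ p.1 j),
      ⟨fresh Λ₀ p.1 j - anchor Λ₀ p.1 j,
        Int.mem_unitVectors_of_sum_abs_eq_one (sum_abs_fresh_sub_anchor (p.2.1 j))⟩,
      (anchor_mem_range_decodeAnchor p.2.2 j).choose)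
  refine ⟨code, ?_⟩
  rintro ⟨p, hp⟩ ⟨q, hq⟩ h
  have hj := congrFun h
  refine Subtype.ext (eq_of_forall_anchor_fresh (c := fun j => (code ⟨p, hp⟩ j).2.2)
    (fun j => (anchor_mem_range_decodeAnchor hp.2 j).choose_spec) (fun j => ?_)
    (fun j => decide_eq_decide.mp (congrArg Prod.fst (hj j)))
    (fun j => congrArg (fun e => (e.2.1 : ι → ℤ)) (hj j)))
  rw [congrArg (·.2.2) (hj j)]
  exact (anchor_mem_range_decodeAnchor hq.2 j).choose_spec

theorem finite_growingNeighborSeqs : (growingNeighborSeqs Λ₀ n).Finite :=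
  have ⟨_, hf⟩ := exists_injective_code Λ₀ n
  Set.finite_coe_iff.mp (Finite.of_injective _ hf)

theorem card_growingNeighborSeqs_le :
    Nat.card (growingNeighborSeqs Λ₀ n) ≤ ∏ j : Fin n, 4 * Fintype.card ι * (#Λ₀ + j) := by
  obtain ⟨f, hf⟩ := exists_injective_code Λ₀ n
  calc Nat.card (growingNeighborSeqs Λ₀ n)
      ≤ Nat.card (∀ j : Fin n, Bool × Int.unitVectors ι × (Λ₀ ⊕ Fin j)) :=
        Nat.card_le_card_of_injective f hf
    _ = ∏ j : Fin n, 2 * #(Int.unitVectors ι) * (#Λ₀ + j) := by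
        simp only [Nat.card_eq_fintype_card, Fintype.card_pi, Fintype.card_prod, Fintype.card_sum,
          Fintype.card_bool, Fintype.card_coe, Fintype.card_fin, mul_assoc]
    _ ≤ ∏ j : Fin n, 4 * Fintype.card ι * (#Λ₀ + j) :=
        prod_le_prod' fun j _ =>
          Nat.mul_le_mul_right _ (by linarith [Int.card_unitVectors_le (ι := ι)])

end Lattice

end GrowingPairSeq

theorem stmt3_general (d n : ℕ) (Λ₀ : Finset (Fin d → ℤ)) :
    (({p | (∀ j : Fin n, (∑ i, |(p j).1 i - (p j).2 i|) = 1) ∧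
        (∀ j : Fin n,
          (p j).1 ∈ (↑Λ₀ ∪
              {x | ∃ i : Fin n, i < j ∧ (x = (p i).1 ∨ x = (p i).2)} : Set (Fin d → ℤ)) ∨
          (p j).2 ∈ (↑Λ₀ ∪
              {x | ∃ i : Fin n, i < j ∧ (x = (p i).1 ∨ x = (p i).2)} : Set (Fin d → ℤ)))} :
        Set (Fin n → (Fin d → ℤ) × (Fin d → ℤ))).Finite) ∧
    Nat.card ({p | (∀ j : Fin n, (∑ i, |(p j).1 i - (p j).2 i|) = 1) ∧
        (∀ j : Fin n,
          (p j).1 ∈ (↑Λ₀ ∪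
              {x | ∃ i : Fin n, i < j ∧ (x = (p i).1 ∨ x = (p i).2)} : Set (Fin d → ℤ)) ∨
          (p j).2 ∈ (↑Λ₀ ∪
              {x | ∃ i : Fin n, i < j ∧ (x = (p i).1 ∨ x = (p i).2)} : Set (Fin d → ℤ)))} :
        Set (Fin n → (Fin d → ℤ) × (Fin d → ℤ)))
      ≤ 2 ^ ((d + 1) * n) * ∏ i ∈ Finset.range n, (Λ₀.card + i) := by
  refine ⟨GrowingPairSeq.finite_growingNeighborSeqs Λ₀ n,
    (GrowingPairSeq.card_growingNeighborSeqs_le Λ₀ n).trans ?_⟩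
  calc ∏ j : Fin n, 4 * Fintype.card (Fin d) * (#Λ₀ + j)
      ≤ ∏ j : Fin n, 2 ^ (d + 1) * (#Λ₀ + j) := by
        gcongr
        simpa using Nat.four_mul_le_two_pow_succ d
    _ = 2 ^ ((d + 1) * n) * ∏ i ∈ range n, (#Λ₀ + i) := by
        rw [prod_mul_distrib, prod_const, card_univ, Fintype.card_fin, pow_mul,
          Fin.prod_univ_eq_prod_range (fun i => #Λ₀ + i)]

/-- The counting bound from the proof of Lemma 3.2(ii): the number of sequences of `n`
ordered nearest-neighbor pairs in `ℤᵈ`, each touching the region generated by a finite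
set `Λ₀` and the previously chosen pairs, is at most
`2^{(d+1)n} · L₀(L₀+1)⋯(L₀+n−1)`. -/
theorem stmt3 (d n : ℕ) (hd : 1 ≤ d) (hn : 1 ≤ n) (Λ₀ : Finset (Fin d → ℤ)) :
    (({p | (∀ j : Fin n, (∑ i, |(p j).1 i - (p j).2 i|) = 1) ∧
        (∀ j : Fin n,
          (p j).1 ∈ (↑Λ₀ ∪
              {x | ∃ i : Fin n, i < j ∧ (x = (p i).1 ∨ x = (p i).2)} : Set (Fin d → ℤ)) ∨
          (p j).2 ∈ (↑Λ₀ ∪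
              {x | ∃ i : Fin n, i < j ∧ (x = (p i).1 ∨ x = (p i).2)} : Set (Fin d → ℤ)))} :
        Set (Fin n → (Fin d → ℤ) × (Fin d → ℤ))).Finite) ∧
    Nat.card ({p | (∀ j : Fin n, (∑ i, |(p j).1 i - (p j).2 i|) = 1) ∧
        (∀ j : Fin n,
          (p j).1 ∈ (↑Λ₀ ∪
              {x | ∃ i : Fin n, i < j ∧ (x = (p i).1 ∨ x = (p i).2)} : Set (Fin d → ℤ)) ∨
          (p j).2 ∈ (↑Λ₀ ∪
              {x | ∃ i : Fin n, i < j ∧ (x = (p i).1 ∨ x = (p i).2)} : Set (Fin d → ℤ)))} :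
        Set (Fin n → (Fin d → ℤ) × (Fin d → ℤ)))
      ≤ 2 ^ ((d + 1) * n) * ∏ i ∈ Finset.range n, (Λ₀.card + i) :=
  stmt3_general d n Λ₀
end

section
/- Let H be a complex Hilbert space and let A, B, W be bounded self-adjoint operators on H with A ≥ 0 and B ≥ 0 (positive operators), and let w ≥ 0 with ‖W‖ ≤ w. Suppose there exists a unit vector Ω ∈ H with A Ω = 0 and B Ω = 0. Let E = inf of the real spectrum of A + B + W, and suppose ψ ∈ H is a unit vector with (A + B + W) ψ = E ψ. Then for every μ > 0 the operator μ·1 + B is invertible in B(H) and re ⟨ψ, (μ·1 + B)⁻¹ ψ⟩ ≥ 1/(μ + 2w). -/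
open scoped InnerProductSpace

/-!
Put `T = μ • 1 + B`. As `B ≥ 0`, `T` is strictly positive, hence invertible, and writing
`T = S⋆S` the Cauchy–Schwarz inequality for `⟪S x, S T⁻¹ x⟫ = ‖x‖²` gives
`1 ≤ re⟪ψ, T ψ⟫ · re⟪ψ, T⁻¹ ψ⟫` for the unit vector `ψ`. It remains to bound
`re⟪ψ, T ψ⟫ = μ + re⟪ψ, B ψ⟫` by `μ + 2w`. By the variational principle
`E ≤ re⟪Ω, (A + B + W) Ω⟫ = re⟪Ω, W Ω⟫ ≤ w`, while
`E = re⟪ψ, (A + B + W) ψ⟫ ≥ re⟪ψ, B ψ⟫ - w` because `A ≥ 0` and `‖W‖ ≤ w`.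
-/

namespace ContinuousLinearMap

variable {H : Type*} [NormedAddCommGroup H] [InnerProductSpace ℂ H]

lemma re_inner_nonneg_of_nonneg {T : H →L[ℂ] H} (hT : 0 ≤ T) (x : H) : 0 ≤ (⟪x, T x⟫_ℂ).re :=
  ((nonneg_iff_isPositive T).mp hT).re_inner_nonneg_right x

lemma abs_re_inner_apply_le_opNorm (T : H →L[ℂ] H) {x : H} (hx : ‖x‖ = 1) :
    |(⟪x, T x⟫_ℂ).re| ≤ ‖T‖ :=
  calc |(⟪x, T x⟫_ℂ).re| ≤ ‖x‖ * ‖T x‖ :=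
        (Complex.abs_re_le_norm _).trans (norm_inner_le_norm _ _)
    _ ≤ ‖T‖ := by simpa [hx] using T.le_opNorm x

variable [CompleteSpace H]

lemma nonneg_of_re_inner_nonneg {T : H →L[ℂ] H} (hT : IsSelfAdjoint T)
    (h : ∀ x, 0 ≤ (⟪x, T x⟫_ℂ).re) : 0 ≤ T :=
  (nonneg_iff_isPositive T).mpr <| isPositive_def'.mpr
    ⟨hT, fun x => by rw [reApplyInnerSelf_apply, inner_re_symm]; exact h x⟩

lemma sInf_spectrum_le_re_inner {S : H →L[ℂ] H} (hS : IsSelfAdjoint S) {x : H} (hx : ‖x‖ = 1) :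
    sInf {r : ℝ | (r : ℂ) ∈ spectrum ℂ S} ≤ (⟪x, S x⟫_ℂ).re := by
  have hspec : {r : ℝ | (r : ℂ) ∈ spectrum ℂ S} = spectrum ℝ S := spectrum.preimage_algebraMap ℂ
  rw [hspec]
  have hE : algebraMap ℝ (H →L[ℂ] H) (sInf (spectrum ℝ S)) ≤ S :=
    algebraMap_le_of_le_spectrum fun r hr => csInf_le (spectrum.isCompact S).bddBelow hr
  simpa [Algebra.algebraMap_eq_smul_one, inner_sub_right, inner_smul_real_right, hx] using
    re_inner_nonneg_of_nonneg (sub_nonneg.mpr hE) x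

lemma norm_pow_four_le_re_inner_mul_re_inner_inverse {T : H →L[ℂ] H} (hT : IsStrictlyPositive T)
    (x : H) : ‖x‖ ^ 4 ≤ (⟪x, T x⟫_ℂ).re * (⟪x, Ring.inverse T x⟫_ℂ).re := by
  obtain ⟨S, rfl⟩ := CStarAlgebra.nonneg_iff_eq_star_mul_self.mp hT.nonneg
  have hS (u v : H) : ⟪u, (star S * S) v⟫_ℂ = ⟪S u, S v⟫_ℂ := by
    rw [star_eq_adjoint, mul_apply_eq_comp, adjoint_inner_right]
  have hnorm (u : H) : (⟪u, u⟫_ℂ).re = ‖u‖ ^ 2 := inner_self_eq_norm_sq (𝕜 := ℂ) u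
  set y := Ring.inverse (star S * S) x
  have hy : (star S * S) y = x := by
    rw [← mul_apply_eq_comp, Ring.mul_inverse_cancel _ hT.isUnit, one_apply_eq_self]
  have hxy : ‖x‖ ^ 2 ≤ ‖S x‖ * ‖S y‖ :=
    calc ‖x‖ ^ 2 = (⟪S x, S y⟫_ℂ).re := by rw [← hS, hy, hnorm]
      _ ≤ ‖S x‖ * ‖S y‖ := re_inner_le_norm (𝕜 := ℂ) _ _
  have hSy : (⟪x, y⟫_ℂ).re = ‖S y‖ ^ 2 := by
    rw [← hnorm, ← hS, hy]
    exact inner_re_symm (𝕜 := ℂ) x y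
  rw [hS, hnorm, hSy]
  nlinarith [pow_le_pow_left₀ (by positivity) hxy 2]

end ContinuousLinearMap

lemma isStrictlyPositive_ofReal_smul_one_add {A : Type*} [CStarAlgebra A] [PartialOrder A]
    [StarOrderedRing A] {μ : ℝ} (hμ : 0 < μ) {B : A} (hB : 0 ≤ B) :
    IsStrictlyPositive ((μ : ℂ) • (1 : A) + B) := by
  rw [Complex.coe_smul, ← Algebra.algebraMap_eq_smul_one]
  exact (isStrictlyPositive_algebraMap hμ).add_nonneg hB

open ContinuousLinearMap in
theorem stmt5_general {H : Type*} [NormedAddCommGroup H] [InnerProductSpace ℂ H] [CompleteSpace H]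
    (A B W : H →L[ℂ] H)
    (hA : IsSelfAdjoint A) (hB : IsSelfAdjoint B) (hW : IsSelfAdjoint W)
    (hApos : ∀ x : H, 0 ≤ (⟪x, A x⟫_ℂ).re) (hBpos : ∀ x : H, 0 ≤ (⟪x, B x⟫_ℂ).re)
    (w : ℝ) (hWnorm : ‖W‖ ≤ w)
    (Ω : H) (hΩ : ‖Ω‖ = 1) (hAΩ : A Ω = 0) (hBΩ : B Ω = 0)
    (E : ℝ) (hE : E = sInf {r : ℝ | (r : ℂ) ∈ spectrum ℂ (A + B + W)})
    (ψ : H) (hψ : ‖ψ‖ = 1) (heig : (A + B + W) ψ = (E : ℂ) • ψ) :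
    ∀ μ : ℝ, 0 < μ →
      IsUnit ((μ : ℂ) • (1 : H →L[ℂ] H) + B) ∧
      1 / (μ + 2 * w) ≤ (⟪ψ, Ring.inverse ((μ : ℂ) • (1 : H →L[ℂ] H) + B) ψ⟫_ℂ).re := by
  intro μ hμ
  set T := (μ : ℂ) • (1 : H →L[ℂ] H) + B
  have hT : IsStrictlyPositive T :=
    isStrictlyPositive_ofReal_smul_one_add hμ (nonneg_of_re_inner_nonneg hB hBpos)
  refine ⟨hT.isUnit, ?_⟩
  have hEw : E ≤ w :=
    calc E ≤ (⟪Ω, (A + B + W) Ω⟫_ℂ).re := hE ▸ sInf_spectrum_le_re_inner ((hA.add hB).add hW) hΩ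
      _ = (⟪Ω, W Ω⟫_ℂ).re := by simp [hAΩ, hBΩ]
      _ ≤ w := (le_abs_self _).trans ((W.abs_re_inner_apply_le_opNorm hΩ).trans hWnorm)
  have hψE : (⟪ψ, A ψ⟫_ℂ).re + (⟪ψ, B ψ⟫_ℂ).re + (⟪ψ, W ψ⟫_ℂ).re = E := by
    simpa [inner_add_right, inner_smul_right, hψ] using congrArg (fun v => (⟪ψ, v⟫_ℂ).re) heig
  have hψW := abs_le.mp ((W.abs_re_inner_apply_le_opNorm hψ).trans hWnorm)
  have hψB : (⟪ψ, B ψ⟫_ℂ).re ≤ 2 * w := by linarith [hApos ψ]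
  have hψT : (⟪ψ, T ψ⟫_ℂ).re = μ + (⟪ψ, B ψ⟫_ℂ).re := by simp [T, hψ]
  have hCS := norm_pow_four_le_re_inner_mul_re_inner_inverse hT ψ
  rw [hψ, one_pow, hψT] at hCS
  rw [div_le_iff₀ (by linarith [hBpos ψ])]
  nlinarith [hBpos ψ]

/-- The bounded-operator core of Lemma 5.1: if `A, B ≥ 0` have a common unit null vector,
`W` is self-adjoint with `‖W‖ ≤ w`, `E` is the infimum of the real spectrum of `A+B+W`
and `ψ` is a unit eigenvector with eigenvalue `E`, then for every `μ > 0` the operator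
`μ·1 + B` is invertible and `re⟨ψ, (μ·1 + B)⁻¹ψ⟩ ≥ 1/(μ + 2w)`. -/
theorem stmt5 {H : Type*} [NormedAddCommGroup H] [InnerProductSpace ℂ H] [CompleteSpace H]
    (A B W : H →L[ℂ] H)
    (hA : IsSelfAdjoint A) (hB : IsSelfAdjoint B) (hW : IsSelfAdjoint W)
    (hApos : ∀ x : H, 0 ≤ (⟪x, A x⟫_ℂ).re) (hBpos : ∀ x : H, 0 ≤ (⟪x, B x⟫_ℂ).re)
    (w : ℝ) (hw : 0 ≤ w) (hWnorm : ‖W‖ ≤ w)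
    (Ω : H) (hΩ : ‖Ω‖ = 1) (hAΩ : A Ω = 0) (hBΩ : B Ω = 0)
    (E : ℝ) (hE : E = sInf {r : ℝ | (r : ℂ) ∈ spectrum ℂ (A + B + W)})
    (ψ : H) (hψ : ‖ψ‖ = 1) (heig : (A + B + W) ψ = (E : ℂ) • ψ) :
    ∀ μ : ℝ, 0 < μ →
      IsUnit ((μ : ℂ) • (1 : H →L[ℂ] H) + B) ∧
      1 / (μ + 2 * w) ≤ (⟪ψ, Ring.inverse ((μ : ℂ) • (1 : H →L[ℂ] H) + B) ψ⟫_ℂ).re :=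
  stmt5_general A B W hA hB hW hApos hBpos w hWnorm Ω hΩ hAΩ hBΩ E hE ψ hψ heig
end

section
/- Let H be a complex Hilbert space, let D ⊆ H be a dense subspace, let T be a continuous linear operator on H, and let C be a compact continuous linear operator on H such that ‖T x‖ ≤ ‖C x‖ for all x ∈ D. Then T is a compact operator. -/
/-- The domination criterion from the proof of Lemma 6.1: a bounded operator whose
action on a dense subspace is norm-dominated by a compact operator is itself compact. -/
theorem stmt7 {H : Type*} [NormedAddCommGroup H] [InnerProductSpace ℂ H] [CompleteSpace H]
    (D : Submodule ℂ H) (hD : Dense (D : Set H))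
    (T C : H →L[ℂ] H) (hC : IsCompactOperator C)
    (hTC : ∀ x ∈ D, ‖T x‖ ≤ ‖C x‖) :
    IsCompactOperator T := by
  -- Step 1: extend the domination to all of `H` by density and continuity.
  have hall : ∀ x : H, ‖T x‖ ≤ ‖C x‖ := by
    intro x
    have hcl : IsClosed {y : H | ‖T y‖ ≤ ‖C y‖} :=
      isClosed_le (T.continuous.norm) (C.continuous.norm)
    have hsub : (D : Set H) ⊆ {y : H | ‖T y‖ ≤ ‖C y‖} := fun y hy => hTC y hy
    have hx : x ∈ closure (D : Set H) := hD x
    exact closure_minimal hsub hcl hx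
  -- Step 2: show the image of the unit ball under `T` is totally bounded.
  have hCtb : TotallyBounded (C '' Metric.ball (0 : H) 1) :=
    (hC.isCompact_closure_image_ball (𝕜₁ := ℂ) 1).totallyBounded.subset subset_closure
  have hTtb : TotallyBounded (T '' Metric.ball (0 : H) 1) := by
    rw [Metric.totallyBounded_iff]
    intro ε hε
    obtain ⟨t, hts, htfin, hcov⟩ :=
      totallyBounded_iff_subset.mp hCtb {p : H × H | dist p.1 p.2 < ε}
        (Metric.dist_mem_uniformity hε)
    -- for each `y ∈ t ⊆ C '' ball`, choose a preimage in the ball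
    choose g hg hgy using fun (y : H) (hy : y ∈ t) => hts hy
    classical
    haveI := htfin.to_subtype
    refine ⟨(fun y : t => T (g y.1 y.2)) '' Set.univ, (Set.finite_univ.image _), ?_⟩
    rintro _ ⟨x, hx, rfl⟩
    obtain ⟨y, hy, hxy⟩ := Set.mem_iUnion₂.mp (hcov ⟨x, hx, rfl⟩)
    refine Set.mem_iUnion₂.mpr ⟨T (g y hy), ⟨⟨y, hy⟩, Set.mem_univ _, rfl⟩, ?_⟩
    have hdist : ‖C x - C (g y hy)‖ < ε := by
      have h1 : dist (C x) y < ε := hxy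
      rw [← hgy y hy, dist_eq_norm] at h1
      exact h1
    have : ‖T x - T (g y hy)‖ ≤ ‖C x - C (g y hy)‖ := by
      have := hall (x - g y hy)
      simpa [map_sub] using this
    simp only [Metric.mem_ball, dist_eq_norm]
    exact lt_of_le_of_lt this hdist
  -- Step 3: conclude compactness.
  exact (isCompactOperator_iff_isCompact_closure_image_ball (𝕜₁ := ℂ)
      (T : H →ₗ[ℂ] H) one_pos).mpr
    (TotallyBounded.isCompact_of_isClosed hTtb.closure isClosed_closure)
end

section
/- Let H be a complex Hilbert space, D ⊆ H a dense subspace, and let U, U₀ : ℝ → B(H) be one-parameter groups of unitary operators (U(s+t) = U(s)U(t), U(0) = 1, each U(t) unitary, and likewise for U₀). Let V : D → H be a linear map such that U₀(−s)Φ ∈ D for all Φ ∈ D and s ∈ ℝ, and fix t ≥ 0. Assume: (a) for every Φ ∈ D the map s ↦ V(U₀(−s)Φ) is continuous on [0, t]; (b) for all Φ ∈ D and Ψ ∈ H, ⟨Ψ, (U(t)U₀(−t) − 1)Φ⟩ = i ∫₀ᵗ ⟨U(−s)Ψ, V(U₀(−s)Φ)⟩ ds; (c) there is a compact continuous linear operator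 C on H with ∫₀ᵗ ‖V(U₀(−s)Φ)‖² ds ≤ ‖C Φ‖² for all Φ ∈ D. Then U(t)U₀(−t) − 1 is a compact operator. -/
open scoped InnerProductSpace
open MeasureTheory
open MeasureTheory

/-- Elementary optimization lemma replacing Cauchy–Schwarz. -/
lemma amgm_opt {x t B : ℝ} (ht : 0 ≤ t) (hB : 0 ≤ B)
    (h : ∀ c > 0, x ≤ (c * t + B / c) / 2) : x ≤ Real.sqrt t * Real.sqrt B := by
  have key : ∀ ε > 0, x ≤ Real.sqrt (t + ε) * Real.sqrt (B + ε) := by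
    intro ε hε
    have htε : (0:ℝ) < t + ε := by linarith
    have hBε : (0:ℝ) < B + ε := by linarith
    set c := Real.sqrt (B + ε) / Real.sqrt (t + ε) with hc
    have hcpos : 0 < c := div_pos (Real.sqrt_pos.2 hBε) (Real.sqrt_pos.2 htε)
    have st : Real.sqrt (t + ε) * Real.sqrt (t + ε) = t + ε := Real.mul_self_sqrt htε.le
    have sB : Real.sqrt (B + ε) * Real.sqrt (B + ε) = B + ε := Real.mul_self_sqrt hBε.le
    have h1 : c * (t + ε) = Real.sqrt (t + ε) * Real.sqrt (B + ε) := by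
      rw [hc, div_mul_eq_mul_div, eq_comm, eq_div_iff (Real.sqrt_pos.2 htε).ne']
      linear_combination Real.sqrt (B + ε) * st
    have h2 : (B + ε) / c = Real.sqrt (t + ε) * Real.sqrt (B + ε) := by
      rw [hc, div_div_eq_mul_div, eq_comm, eq_div_iff (Real.sqrt_pos.2 hBε).ne']
      linear_combination Real.sqrt (t + ε) * sB
    calc x ≤ (c * t + B / c) / 2 := h c hcpos
      _ ≤ (c * (t + ε) + (B + ε) / c) / 2 := by
          gcongr
          · linarith
          · linarith
      _ = Real.sqrt (t + ε) * Real.sqrt (B + ε) := by rw [h1, h2]; ring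
  have hlim : Filter.Tendsto (fun ε : ℝ => Real.sqrt (t + ε) * Real.sqrt (B + ε))
      (nhdsWithin 0 (Set.Ioi 0)) (nhds (Real.sqrt t * Real.sqrt B)) := by
    have hcont : Continuous fun ε : ℝ => Real.sqrt (t + ε) * Real.sqrt (B + ε) := by
      fun_prop
    have := hcont.tendsto 0
    simpa using this.mono_left nhdsWithin_le_nhds
  exact ge_of_tendsto hlim (Filter.eventually_of_mem self_mem_nhdsWithin fun ε hε => key ε hε)

/-- An operator norm-dominated by a compact operator is compact. -/
lemma isCompactOperator_of_dominated {H : Type*} [NormedAddCommGroup H]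
    [InnerProductSpace ℂ H] [CompleteSpace H]
    (f g : H →L[ℂ] H) (M : ℝ) (hg : IsCompactOperator g)
    (hfg : ∀ x, ‖f x‖ ≤ M * ‖g x‖) : IsCompactOperator f := by
  classical
  have hfg' : ∀ x, ‖f x‖ ≤ |M| * ‖g x‖ := fun x =>
    (hfg x).trans (mul_le_mul_of_nonneg_right (le_abs_self M) (norm_nonneg _))
  -- total boundedness of g '' ball
  have hg' : IsCompactOperator ⇑(g.toLinearMap) := hg
  have hgtb : TotallyBounded (⇑g '' Metric.ball 0 1) :=
    ((hg'.isCompact_closure_image_ball (𝕜₁ := ℂ) 1).totallyBounded).subset subset_closure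
  have hftb : TotallyBounded (⇑f '' Metric.ball 0 1) := by
    refine Metric.totallyBounded_iff.2 fun ε hε => ?_
    set δ := ε / (|M| + 1) with hδ
    have hMpos : (0:ℝ) < |M| + 1 := by positivity
    have hδpos : 0 < δ := div_pos hε hMpos
    obtain ⟨n, hnsub, hnfin, hncov⟩ := totallyBounded_iff_subset.1 hgtb
      {p : H × H | dist p.1 p.2 < δ} (Metric.dist_mem_uniformity hδpos)
    set φ : H → H := fun y =>
      if h : ∃ x ∈ Metric.ball (0:H) 1, g x = y then h.choose else 0 with hφ
    refine ⟨(fun y => f (φ y)) '' n, hnfin.image _, ?_⟩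
    rintro _ ⟨x, hx, rfl⟩
    have hgx : g x ∈ ⋃ y ∈ n, {z | (z, y) ∈ {p : H × H | dist p.1 p.2 < δ}} :=
      hncov (Set.mem_image_of_mem _ hx)
    simp only [Set.mem_iUnion, Set.mem_setOf_eq] at hgx
    obtain ⟨y, hy, hdist⟩ := hgx
    have hyex : ∃ x ∈ Metric.ball (0:H) 1, g x = y := hnsub hy
    have hφy : φ y = hyex.choose := dif_pos hyex
    have hspec := hyex.choose_spec
    refine Set.mem_iUnion₂.2 ⟨f (φ y), Set.mem_image_of_mem _ hy, ?_⟩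
    have h1 : dist (f x) (f (φ y)) = ‖f (x - φ y)‖ := by
      rw [dist_eq_norm, ← map_sub]
    have h2 : ‖g (x - φ y)‖ = dist (g x) y := by
      rw [dist_eq_norm, map_sub, hφy, hspec.2]
    have : dist (f x) (f (φ y)) ≤ |M| * dist (g x) y := by
      rw [h1, ← h2]; exact hfg' _
    have hlt : |M| * dist (g x) y < (|M| + 1) * δ := by
      have h3 : |M| * dist (g x) y ≤ |M| * δ :=
        mul_le_mul_of_nonneg_left hdist.le (abs_nonneg M)
      have : |M| * δ < (|M| + 1) * δ := by nlinarith
      linarith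
    have hδε : (|M| + 1) * δ = ε := by
      rw [hδ]; field_simp
    exact Metric.mem_ball.2 (by rw [← hδε]; exact lt_of_le_of_lt this hlt)
  refine ⟨closure (⇑f '' Metric.ball 0 1), ?_, ?_⟩
  · rw [isCompact_iff_totallyBounded_isComplete]
    exact ⟨hftb.closure, isClosed_closure.isComplete⟩
  · exact Filter.mem_of_superset (Metric.ball_mem_nhds 0 one_pos)
      fun x hx => subset_closure (Set.mem_image_of_mem _ hx)

/-- Lemma 6.1: given two one-parameter unitary groups `U`, `U₀` related through a
perturbation `V` (defined on a dense invariant domain `D`) by the Duhamel identity, and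
a Cook-type square-integrability condition with a compact majorant `C`, the wave
operator difference `U(t)U₀(−t) − 1` is compact. -/
theorem stmt8 {H : Type*} [NormedAddCommGroup H] [InnerProductSpace ℂ H] [CompleteSpace H]
    (D : Submodule ℂ H) (hD : Dense (D : Set H))
    (U U₀ : ℝ → H →L[ℂ] H)
    (hUgrp : ∀ s t : ℝ, U (s + t) = U s ∘L U t) (hU0' : U 0 = 1)
    (hUunit : ∀ s : ℝ, U s ∈ unitary (H →L[ℂ] H))
    (hU₀grp : ∀ s t : ℝ, U₀ (s + t) = U₀ s ∘L U₀ t) (hU₀0 : U₀ 0 = 1)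
    (hU₀unit : ∀ s : ℝ, U₀ s ∈ unitary (H →L[ℂ] H))
    (V : D →ₗ[ℂ] H)
    (hmem : ∀ (s : ℝ) (Φ : D), U₀ (-s) (Φ : H) ∈ D)
    (t : ℝ) (ht : 0 ≤ t)
    (hcont : ∀ Φ : D,
      ContinuousOn (fun s : ℝ => (V ⟨U₀ (-s) (Φ : H), hmem s Φ⟩ : H)) (Set.Icc 0 t))
    (hDuhamel : ∀ (Φ : D) (Ψ : H),
      ⟪Ψ, ((U t ∘L U₀ (-t)) - 1) (Φ : H)⟫_ℂ =
        Complex.I * ∫ s in (0 : ℝ)..t, ⟪U (-s) Ψ, (V ⟨U₀ (-s) (Φ : H), hmem s Φ⟩ : H)⟫_ℂ)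
    (C : H →L[ℂ] H) (hC : IsCompactOperator C)
    (hCook : ∀ Φ : D,
      (∫ s in (0 : ℝ)..t, ‖(V ⟨U₀ (-s) (Φ : H), hmem s Φ⟩ : H)‖ ^ 2) ≤ ‖C (Φ : H)‖ ^ 2) :
    IsCompactOperator ((U t ∘L U₀ (-t)) - 1 : H →L[ℂ] H) := by
  set W : H →L[ℂ] H := (U t ∘L U₀ (-t)) - 1 with hW
  -- Step 1: the key norm estimate on D
  have key : ∀ Φ : D, ‖W (Φ : H)‖ ≤ Real.sqrt t * ‖C (Φ : H)‖ := by
    intro Φ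
    set f : ℝ → H := fun s => (V ⟨U₀ (-s) (Φ : H), hmem s Φ⟩ : H) with hf
    have hIcc : Set.uIcc (0:ℝ) t = Set.Icc 0 t := Set.uIcc_of_le ht
    have hf_cont : ContinuousOn f (Set.Icc 0 t) := hcont Φ
    have hf_int : IntervalIntegrable (fun s => ‖f s‖) volume 0 t := by
      apply ContinuousOn.intervalIntegrable
      rw [hIcc]; exact hf_cont.norm
    have hf2_int : IntervalIntegrable (fun s => ‖f s‖ ^ 2) volume 0 t := by
      apply ContinuousOn.intervalIntegrable
      rw [hIcc]; exact hf_cont.norm.pow 2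
    set B : ℝ := ∫ s in (0:ℝ)..t, ‖f s‖ ^ 2 with hB
    have hB0 : 0 ≤ B := intervalIntegral.integral_nonneg ht fun u _ => sq_nonneg _
    have hBC : B ≤ ‖C (Φ : H)‖ ^ 2 := hCook Φ
    -- Cauchy–Schwarz via AM–GM
    have step1 : (∫ s in (0:ℝ)..t, ‖f s‖) ≤ Real.sqrt t * Real.sqrt B := by
      refine amgm_opt ht hB0 fun c hc => ?_
      have hrhs_int : IntervalIntegrable (fun s => (c + ‖f s‖ ^ 2 / c) / 2) volume 0 t := by
        apply ContinuousOn.intervalIntegrable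
        rw [hIcc]
        exact ((continuousOn_const.add ((hf_cont.norm.pow 2).div_const c)).div_const 2)
      have hpt : ∀ s ∈ Set.Icc (0:ℝ) t, ‖f s‖ ≤ (c + ‖f s‖ ^ 2 / c) / 2 := by
        intro s _
        rw [le_div_iff₀ (by norm_num : (0:ℝ) < 2), ← sub_nonneg]
        have heq : c + ‖f s‖ ^ 2 / c - ‖f s‖ * 2 = (‖f s‖ - c) ^ 2 / c := by
          field_simp; ring
        rw [heq]; positivity
      calc (∫ s in (0:ℝ)..t, ‖f s‖)
          ≤ ∫ s in (0:ℝ)..t, (c + ‖f s‖ ^ 2 / c) / 2 :=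
            intervalIntegral.integral_mono_on ht hf_int hrhs_int hpt
        _ = (c * t + B / c) / 2 := by
            rw [intervalIntegral.integral_div]
            rw [intervalIntegral.integral_add intervalIntegrable_const (hf2_int.div_const c)]
            rw [intervalIntegral.integral_div, intervalIntegral.integral_const]
            rw [hB]
            simp [smul_eq_mul]
            ring
    -- Duhamel + unitarity
    set Ψ : H := W (Φ : H) with hΨ
    have hdu := hDuhamel Φ Ψ
    have hns : ‖Ψ‖ ^ 2 = ‖⟪Ψ, Ψ⟫_ℂ‖ := by
      rw [inner_self_eq_norm_sq_to_K]
      simp [norm_pow]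
    have hΨsq : ‖Ψ‖ ^ 2 =
        ‖∫ s in (0:ℝ)..t, ⟪U (-s) Ψ, f s⟫_ℂ‖ := by
      rw [hns]
      rw [show ⟪Ψ, Ψ⟫_ℂ = ⟪Ψ, W (Φ : H)⟫_ℂ from rfl, hdu]
      rw [norm_mul, Complex.norm_I, one_mul]
    have hRHS0 : 0 ≤ Real.sqrt t * ‖C (Φ : H)‖ := by positivity
    have hsqB : Real.sqrt B ≤ ‖C (Φ : H)‖ := by
      calc Real.sqrt B ≤ Real.sqrt (‖C (Φ : H)‖ ^ 2) := Real.sqrt_le_sqrt hBC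
        _ = ‖C (Φ : H)‖ := Real.sqrt_sq (norm_nonneg _)
    by_cases hint : IntervalIntegrable (fun s => ⟪U (-s) Ψ, f s⟫_ℂ) volume 0 t
    · have hbound : ‖Ψ‖ ^ 2 ≤ ‖Ψ‖ * (Real.sqrt t * Real.sqrt B) := by
        rw [hΨsq]
        calc ‖∫ s in (0:ℝ)..t, ⟪U (-s) Ψ, f s⟫_ℂ‖
            ≤ ∫ s in (0:ℝ)..t, ‖⟪U (-s) Ψ, f s⟫_ℂ‖ :=
              intervalIntegral.norm_integral_le_integral_norm ht
          _ ≤ ∫ s in (0:ℝ)..t, ‖Ψ‖ * ‖f s‖ := by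
              refine intervalIntegral.integral_mono_on ht hint.norm
                (hf_int.const_mul ‖Ψ‖) fun s _ => ?_
              calc ‖⟪U (-s) Ψ, f s⟫_ℂ‖ ≤ ‖U (-s) Ψ‖ * ‖f s‖ := norm_inner_le_norm _ _
                _ = ‖Ψ‖ * ‖f s‖ := by
                    rw [ContinuousLinearMap.norm_map_of_mem_unitary (hUunit (-s))]
          _ = ‖Ψ‖ * ∫ s in (0:ℝ)..t, ‖f s‖ := intervalIntegral.integral_const_mul _ _
          _ ≤ ‖Ψ‖ * (Real.sqrt t * Real.sqrt B) :=
              mul_le_mul_of_nonneg_left step1 (norm_nonneg _)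
      have : ‖Ψ‖ ≤ Real.sqrt t * Real.sqrt B := by
        rcases eq_or_lt_of_le (norm_nonneg Ψ) with h0 | hpos
        · rw [← h0]; positivity
        · have := hbound
          rw [sq] at this
          exact le_of_mul_le_mul_left this hpos
      calc ‖Ψ‖ ≤ Real.sqrt t * Real.sqrt B := this
        _ ≤ Real.sqrt t * ‖C (Φ : H)‖ :=
            mul_le_mul_of_nonneg_left hsqB (Real.sqrt_nonneg t)
    · have : ‖Ψ‖ ^ 2 = 0 := by
        rw [hΨsq, intervalIntegral.integral_undef hint, norm_zero]
      have hΨ0 : ‖Ψ‖ = 0 := by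
        have := sq_eq_zero_iff.1 this
        exact this
      rw [hΨ0]; exact hRHS0
  -- Step 2: extend to all of H by density
  have keyH : ∀ x : H, ‖W x‖ ≤ Real.sqrt t * ‖C x‖ := by
    have hclosed : IsClosed {x : H | ‖W x‖ ≤ Real.sqrt t * ‖C x‖} :=
      isClosed_le (W.continuous.norm) (continuous_const.mul C.continuous.norm)
    intro x
    have hsub : (D : Set H) ⊆ {x : H | ‖W x‖ ≤ Real.sqrt t * ‖C x‖} :=
      fun y hy => key ⟨y, hy⟩
    have := closure_minimal hsub hclosed
    rw [hD.closure_eq] at this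
    exact this (Set.mem_univ x)
  exact isCompactOperator_of_dominated W C (Real.sqrt t) hC keyH
end
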